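/- arXiv:2603.22308 — 6 statements merged into one kernel-verified Lean document; each statement's English description precedes it below -/
import Mathlib

section
/- Let R₁ and R₂ be real closed fields (linearly ordered fields in which every nonnegative element has a square root and every polynomial of odd degree has a root) with the same uncountable cardinality. Then the fields R₁(i) and R₂(i), obtained by adjoining to R₁ and R₂ a root of the polynomial X² + 1, are isomorphic as fields. -/
/-!
A real closed field `R` has no proper extension of odd degree, so by Sylow theory every finite
Galois extension `M / R` has `2`-power degree. If `[M : R] ≥ 4`, the Galois correspondence gives
a tower `R ⊂ K ⊂ E ⊆ M` of quadratic steps. But a quadratic extension `K` of `R` contains a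
square root `j` of `-1`, and then every `a + b j` is a square in `K`, so `K` has no quadratic
extension. Hence every finite extension of `R` has degree at most `2` and `R(i)` is algebraically
closed. Both `R₁(i)` and `R₂(i)` are then algebraically closed of characteristic zero and of the
same uncountable cardinality `#Rₖ(i) = #Rₖ`, so they are isomorphic by Steinitz's theorem.
-/

open Polynomial Module Cardinal

universe u

theorem Polynomial.eq_quadratic_of_natDegree_eq_two {F : Type*} [Field F] {p : F[X]}
    (hp : p.natDegree = 2) : p = C (p.coeff 2) * X ^ 2 + C (p.coeff 1) * X + C (p.coeff 0) := by
  conv_lhs => rw [p.as_sum_range_C_mul_X_pow, hp]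
  simp only [Finset.sum_range_succ, Finset.sum_range_zero]
  ring

theorem AdjoinRoot.finrank_eq_natDegree {F : Type*} [Field F] (f : F[X]) :
    finrank F (AdjoinRoot f) = f.natDegree :=
  finrank_quotient_span_eq_natDegree

instance AdjoinRoot.charZero {F : Type*} [Field F] [CharZero F] (f : F[X])
    [Fact (Irreducible f)] : CharZero (AdjoinRoot f) :=
  charZero_of_injective_algebraMap (algebraMap F _).injective

theorem AdjoinRoot.cardinalMk_eq {F : Type u} [Field F] [Infinite F] (f : F[X])
    [Fact (Irreducible f)] : #(AdjoinRoot f) = #F := by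
  have : FiniteDimensional F (AdjoinRoot f) :=
    (powerBasis (Fact.out : Irreducible f).ne_zero).finite
  refine le_antisymm ?_ (mk_le_of_injective (algebraMap F (AdjoinRoot f)).injective)
  exact (Algebra.IsAlgebraic.cardinalMk_le_max F _).trans (max_eq_left (aleph0_le_mk F)).le

section FieldExtension

variable {F K : Type*} [Field F] [Field K] [Algebra F K]

theorem exists_notMem_range_algebraMap_of_finrank_ne_one (h : finrank F K ≠ 1) :
    ∃ α : K, α ∉ Set.range (algebraMap F K) := by
  by_contra! hall
  exact h (IntermediateField.bot_eq_top_iff_finrank_eq_one.1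
    (eq_top_iff.2 fun x _ ↦ IntermediateField.mem_bot.2 (hall x)))

theorem finrank_eq_one_of_forall_exists_root [FiniteDimensional F K]
    (h : ∀ p : F[X], Irreducible p → p.natDegree ∣ finrank F K → ∃ x, p.IsRoot x) :
    finrank F K = 1 := by
  rw [← IntermediateField.bot_eq_top_iff_finrank_eq_one, eq_comm, eq_bot_iff]
  intro α _
  have hα : IsIntegral F α := .of_finite F α
  obtain ⟨x, hx⟩ := h _ (minpoly.irreducible hα) (minpoly.degree_dvd hα)
  have hdeg := degree_eq_one_of_irreducible_of_root (minpoly.irreducible hα) hx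
  exact IntermediateField.mem_bot.2 (minpoly.degree_eq_one_iff.1 hdeg)

theorem finrank_eq_one_of_odd_finrank [FiniteDimensional F K]
    (hodd : ∀ p : F[X], Odd p.natDegree → ∃ x, p.IsRoot x) (h : Odd (finrank F K)) :
    finrank F K = 1 :=
  finrank_eq_one_of_forall_exists_root fun p _ hp ↦ hodd p (h.of_dvd_nat hp)

theorem exists_isRoot_of_discrim_eq_mul_self [NeZero (2 : F)] {p : F[X]} (hp : p.natDegree = 2)
    {s : F} (hs : discrim (p.coeff 2) (p.coeff 1) (p.coeff 0) = s * s) : ∃ x, p.IsRoot x := by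
  have ha : p.coeff 2 ≠ 0 := by
    rw [← hp]; exact leadingCoeff_ne_zero.2 (ne_zero_of_natDegree_gt (hp ▸ two_pos))
  obtain ⟨x, hx⟩ := exists_quadratic_eq_zero ha ⟨s, hs⟩
  refine ⟨x, ?_⟩
  rw [IsRoot, eq_quadratic_of_natDegree_eq_two hp]
  simp only [eval_add, eval_mul, eval_C, eval_pow, eval_X]
  linear_combination hx

theorem finrank_ne_two_of_forall_isSquare [NeZero (2 : F)] (hsq : ∀ z : F, IsSquare z) :
    finrank F K ≠ 2 := by
  intro h2
  have : FiniteDimensional F K := Module.finite_of_finrank_eq_succ h2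
  have h1 : finrank F K = 1 := finrank_eq_one_of_forall_exists_root fun p _ hdvd ↦ by
    rw [h2] at hdvd
    rcases (Nat.dvd_prime Nat.prime_two).1 hdvd with hdeg | hdeg
    · exact exists_root_of_degree_eq_one (degree_eq_iff_natDegree_eq_of_pos one_pos |>.2 hdeg)
    · exact (hsq _).elim fun s hs ↦ exists_isRoot_of_discrim_eq_mul_self hdeg hs
  omega

theorem exists_algebraMap_add_algebraMap_mul_eq_of_finrank_eq_two (h : finrank F K = 2) {j : K}
    (hj : j ∉ Set.range (algebraMap F K)) (z : K) :
    ∃ a b : F, algebraMap F K a + algebraMap F K b * j = z := by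
  have hli : LinearIndependent F ![1, j] :=
    (LinearIndependent.pair_iff' one_ne_zero).2 fun a ha ↦
      hj ⟨a, by rwa [Algebra.algebraMap_eq_smul_one]⟩
  have hspan := hli.span_eq_top_of_card_eq_finrank (by simp [h])
  have hz : z ∈ Submodule.span F {1, j} := by
    rw [← Matrix.range_cons_cons_empty 1 j ![], hspan]
    exact Submodule.mem_top
  obtain ⟨a, b, hab⟩ := Submodule.mem_span_pair.1 hz
  exact ⟨a, b, by rw [← hab, Algebra.smul_def, Algebra.smul_def, mul_one]⟩

end FieldExtension

section Galois

variable {F M : Type*} [Field F] [Field M] [Algebra F M] [FiniteDimensional F M] [IsGalois F M]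

theorem IsGalois.finrank_fixedField_eq_index (H : Subgroup Gal(M/F)) :
    finrank F (IntermediateField.fixedField H) = H.index := by
  rw [IntermediateField.finrank_eq_fixingSubgroup_index,
    IntermediateField.fixingSubgroup_fixedField]

variable (p : ℕ) [Fact p.Prime]

theorem IsGalois.exists_intermediateField_finrank_eq_pow {n k : ℕ} (h : finrank F M = p ^ n)
    (hk : k ≤ n) : ∃ K : IntermediateField F M, finrank F K = p ^ k := by
  have hcard : Nat.card Gal(M/F) = p ^ k * p ^ (n - k) := by
    rw [IsGalois.card_aut_eq_finrank, h, ← pow_add, Nat.add_sub_cancel' hk]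
  obtain ⟨H, hH⟩ := Sylow.exists_subgroup_card_pow_prime p (Dvd.intro_left _ hcard.symm)
  refine ⟨IntermediateField.fixedField H, ?_⟩
  rw [finrank_fixedField_eq_index]
  have := H.card_mul_index
  rw [hH, hcard, mul_comm] at this
  exact Nat.eq_of_mul_eq_mul_right (pow_pos (Fact.out : p.Prime).pos _) this

theorem IsGalois.exists_finrank_eq_pow
    (h : ∀ K : IntermediateField F M, ¬ p ∣ finrank F K → finrank F K = 1) :
    ∃ n, finrank F M = p ^ n := by
  obtain ⟨P⟩ : Nonempty (Sylow p Gal(M/F)) := inferInstance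
  have hindex : (P : Subgroup Gal(M/F)).index = 1 := by
    rw [← finrank_fixedField_eq_index]
    exact h _ (by rw [finrank_fixedField_eq_index]; exact P.not_dvd_index)
  obtain ⟨n, hn⟩ := IsPGroup.iff_card.1 P.isPGroup'
  refine ⟨n, ?_⟩
  rw [← IsGalois.card_aut_eq_finrank, ← (P : Subgroup Gal(M/F)).card_mul_index, hindex, mul_one,
    hn]

end Galois

section OrderedField

variable {R : Type*} [Field R] [LinearOrder R] [IsStrictOrderedRing R]

theorem fact_irreducible_X_sq_add_one : Fact (Irreducible (X ^ 2 + 1 : R[X])) :=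
  ⟨irreducible_of_degree_le_three_of_not_isRoot
    (by rw [show (X ^ 2 + 1 : R[X]).natDegree = 2 by compute_degree!]; decide)
    fun x hx ↦ by
      have : x ^ 2 + 1 = 0 := by simpa using hx
      nlinarith [sq_nonneg x]⟩

theorem exists_sq_sub_sq_eq_and_two_mul_mul_eq (hsq : ∀ x : R, 0 ≤ x → IsSquare x) (a b : R) :
    ∃ c d : R, c ^ 2 - d ^ 2 = a ∧ 2 * c * d = b := by
  obtain ⟨r, hr⟩ := hsq (a ^ 2 + b ^ 2) (by positivity)
  set s := |r|
  have hs : s ^ 2 = a ^ 2 + b ^ 2 := by rw [sq_abs, hr, sq]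
  have hs0 : 0 ≤ s := abs_nonneg r
  obtain ⟨c, hc⟩ := hsq ((s + a) / 2) (by nlinarith)
  obtain ⟨d, hd⟩ := hsq ((s - a) / 2) (by nlinarith)
  have hcd : (2 * c * d) ^ 2 = b ^ 2 := by
    linear_combination (-4 * c * c) * hd - 2 * (s - a) * hc + hs
  rcases sq_eq_sq_iff_eq_or_eq_neg.1 hcd with hb | hb
  · exact ⟨c, d, by linear_combination hd - hc, hb⟩
  · exact ⟨c, -d, by linear_combination hd - hc, by linear_combination -hb⟩

theorem isSquare_algebraMap_add_algebraMap_mul {A : Type*} [CommRing A] [Algebra R A]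
    (hsq : ∀ x : R, 0 ≤ x → IsSquare x) {j : A} (hj : j ^ 2 = -1) (a b : R) :
    IsSquare (algebraMap R A a + algebraMap R A b * j) := by
  obtain ⟨c, d, rfl, rfl⟩ := exists_sq_sub_sq_eq_and_two_mul_mul_eq hsq a b
  refine ⟨algebraMap R A c + algebraMap R A d * j, ?_⟩
  simp only [map_sub, map_mul, map_pow, map_ofNat]
  linear_combination -(algebraMap R A d) ^ 2 * hj

variable {K : Type*} [Field K] [Algebra R K]

theorem exists_sq_eq_neg_one_of_finrank_eq_two (hsq : ∀ x : R, 0 ≤ x → IsSquare x)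
    (h : finrank R K = 2) : ∃ j : K, j ^ 2 = -1 := by
  have : FiniteDimensional R K := Module.finite_of_finrank_eq_succ h
  obtain ⟨α, hα⟩ :=
    exists_notMem_range_algebraMap_of_finrank_ne_one (F := R) (K := K) (by omega)
  have hint : IsIntegral R α := .of_finite R α
  set q := minpoly R α
  have hq2 : q.natDegree = 2 := le_antisymm (Nat.le_of_dvd two_pos (h ▸ minpoly.degree_dvd hint))
    ((minpoly.two_le_natDegree_iff hint).2 hα)
  have hlead : q.coeff 2 = 1 := hq2 ▸ (minpoly.monic hint).coeff_natDegree
  have hq : q = C 1 * X ^ 2 + C (q.coeff 1) * X + C (q.coeff 0) :=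
    hlead ▸ eq_quadratic_of_natDegree_eq_two hq2
  set b := q.coeff 1
  set c := q.coeff 0
  have hdisc : discrim 1 b c < 0 := by
    by_contra! hnonneg
    obtain ⟨s, hs⟩ := hsq _ hnonneg
    obtain ⟨x, hx⟩ := exists_isRoot_of_discrim_eq_mul_self hq2 (hlead ▸ hs)
    have := degree_eq_one_of_irreducible_of_root (minpoly.irreducible hint) hx
    rw [degree_eq_natDegree (minpoly.ne_zero hint), hq2] at this
    exact absurd this (by decide)
  obtain ⟨s, hs⟩ := hsq (-discrim 1 b c) (by linarith)
  have hs0 : algebraMap R K s ≠ 0 :=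
    (_root_.map_ne_zero _).2 fun h ↦ by rw [h, mul_zero] at hs; linarith
  have hα2 : α ^ 2 + algebraMap R K b * α + algebraMap R K c = 0 := by
    have : aeval α q = 0 := minpoly.aeval R α
    rw [hq] at this
    simpa [Algebra.smul_def] using this
  have hs' : algebraMap R K s * algebraMap R K s =
      4 * algebraMap R K c - algebraMap R K b ^ 2 := by
    rw [← map_mul, ← hs]
    simp only [discrim, map_neg, map_sub, map_mul, map_pow, map_one, map_ofNat]
    ring
  refine ⟨(2 * α + algebraMap R K b) / algebraMap R K s, ?_⟩
  field_simp
  linear_combination 4 * hα2 + hs'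

theorem isSquare_of_finrank_eq_two (hsq : ∀ x : R, 0 ≤ x → IsSquare x) (h : finrank R K = 2)
    (z : K) : IsSquare z := by
  obtain ⟨j, hj⟩ := exists_sq_eq_neg_one_of_finrank_eq_two hsq h
  have hjR : j ∉ Set.range (algebraMap R K) := by
    rintro ⟨r, rfl⟩
    have hr : r ^ 2 = -1 := (algebraMap R K).injective (by simpa using hj)
    nlinarith [sq_nonneg r]
  obtain ⟨a, b, rfl⟩ := exists_algebraMap_add_algebraMap_mul_eq_of_finrank_eq_two h hjR z
  exact isSquare_algebraMap_add_algebraMap_mul hsq hj a b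

end OrderedField

namespace IsRealClosed

variable {R : Type*} [Field R] [LinearOrder R] [IsStrictOrderedRing R] [IsRealClosed R]

attribute [local instance] fact_irreducible_X_sq_add_one

theorem finrank_le_two_of_isGalois (M : Type*) [Field M] [Algebra R M] [FiniteDimensional R M]
    [IsGalois R M] : finrank R M ≤ 2 := by
  have : Fact (Nat.Prime 2) := ⟨Nat.prime_two⟩
  obtain ⟨n, hn⟩ := IsGalois.exists_finrank_eq_pow (F := R) (M := M) 2 fun K hK ↦
    finrank_eq_one_of_odd_finrank (fun _ ↦ exists_isRoot_of_odd_natDegree)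
      (Nat.odd_iff.2 (Nat.two_dvd_ne_zero.1 hK))
  obtain _ | _ | m := n
  · simp [hn]
  · simp [hn]
  exfalso
  obtain ⟨K, hK⟩ := IsGalois.exists_intermediateField_finrank_eq_pow 2 hn (k := 1) (by omega)
  have hKM : finrank K M = 2 ^ (m + 1) := by
    have := finrank_mul_finrank R K M
    rw [hK, hn, pow_one, pow_succ' 2 (m + 1)] at this
    omega
  obtain ⟨E, hE⟩ := IsGalois.exists_intermediateField_finrank_eq_pow 2 hKM (k := 1) (by omega)
  rw [pow_one] at hK hE
  have : CharZero K := charZero_of_injective_algebraMap (algebraMap R K).injective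
  exact finrank_ne_two_of_forall_isSquare
    (isSquare_of_finrank_eq_two (fun _ ↦ IsSquare.of_nonneg) hK) hE

theorem finrank_le_two (L : Type*) [Field L] [Algebra R L] [FiniteDimensional R L] :
    finrank R L ≤ 2 := by
  let A := AlgebraicClosure L
  have : Algebra.IsAlgebraic R A := .trans R L A
  have : IsAlgClosure R A := ⟨inferInstance, inferInstance⟩
  calc finrank R L ≤ finrank R (IntermediateField.normalClosure R L A) :=
        (IsScalarTower.toAlgHom R L _).toLinearMap.finrank_le_finrank_of_injective
          (IsScalarTower.toAlgHom R L _).injective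
    _ ≤ 2 := finrank_le_two_of_isGalois _

theorem isAlgClosed_adjoinRoot_X_sq_add_one : IsAlgClosed (AdjoinRoot (X ^ 2 + 1 : R[X])) := by
  let C := AdjoinRoot (X ^ 2 + 1 : R[X])
  have hmonic : (X ^ 2 + 1 : R[X]).Monic := by monicity!
  have : FiniteDimensional R C := hmonic.finite_adjoinRoot
  have hC : finrank R C = 2 := by
    rw [AdjoinRoot.finrank_eq_natDegree]
    compute_degree!
  refine IsAlgClosed.of_exists_root _ fun q hq hirr ↦ ?_
  have : Fact (Irreducible q) := ⟨hirr⟩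
  have : FiniteDimensional C (AdjoinRoot q) := hq.finite_adjoinRoot
  have : FiniteDimensional R (AdjoinRoot q) := .trans R C (AdjoinRoot q)
  have hL := finrank_le_two (R := R) (AdjoinRoot q)
  rw [← finrank_mul_finrank R C (AdjoinRoot q), hC, AdjoinRoot.finrank_eq_natDegree] at hL
  exact exists_root_of_degree_eq_one
    (degree_eq_iff_natDegree_eq_of_pos one_pos |>.2 (by have := hirr.natDegree_pos; omega))

theorem nonempty_ringEquiv_adjoinRoot_X_sq_add_one {R₁ R₂ : Type u}
    [Field R₁] [LinearOrder R₁] [IsStrictOrderedRing R₁] [IsRealClosed R₁]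
    [Field R₂] [LinearOrder R₂] [IsStrictOrderedRing R₂] [IsRealClosed R₂]
    (h : ℵ₀ < #R₁) (hcard : #R₁ = #R₂) :
    Nonempty (AdjoinRoot (X ^ 2 + 1 : R₁[X]) ≃+* AdjoinRoot (X ^ 2 + 1 : R₂[X])) := by
  have := isAlgClosed_adjoinRoot_X_sq_add_one (R := R₁)
  have := isAlgClosed_adjoinRoot_X_sq_add_one (R := R₂)
  have h₁ := AdjoinRoot.cardinalMk_eq (X ^ 2 + 1 : R₁[X])
  have h₂ := AdjoinRoot.cardinalMk_eq (X ^ 2 + 1 : R₂[X])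
  exact IsAlgClosed.ringEquiv_of_equiv_of_charZero (h₁ ▸ h)
    (Cardinal.eq.1 (by rw [h₁, h₂, hcard]))

end IsRealClosed

/-- If `R₁` and `R₂` are real closed fields (linearly ordered fields in which every
nonnegative element has a square root and every odd-degree polynomial has a root) of the
same uncountable cardinality, then the fields `R₁(i)` and `R₂(i)`, obtained by adjoining
a root of `X² + 1`, are isomorphic as fields. -/
theorem adjoin_i_isomorphic_of_realClosed_card_eq
    {R₁ R₂ : Type u} [Field R₁] [LinearOrder R₁] [IsStrictOrderedRing R₁]
    [Field R₂] [LinearOrder R₂] [IsStrictOrderedRing R₂]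
    (hsq₁ : ∀ x : R₁, 0 ≤ x → ∃ y : R₁, y ^ 2 = x)
    (hodd₁ : ∀ p : R₁[X], Odd p.natDegree → ∃ x : R₁, p.IsRoot x)
    (hsq₂ : ∀ x : R₂, 0 ≤ x → ∃ y : R₂, y ^ 2 = x)
    (hodd₂ : ∀ p : R₂[X], Odd p.natDegree → ∃ x : R₂, p.IsRoot x)
    (huncount : Cardinal.aleph0 < Cardinal.mk R₁)
    (hcard : Cardinal.mk R₁ = Cardinal.mk R₂) :
    Nonempty (AdjoinRoot (X ^ 2 + 1 : R₁[X]) ≃+* AdjoinRoot (X ^ 2 + 1 : R₂[X])) := by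
  have := IsRealClosed.of_linearOrderedField (R := R₁)
    (fun hx ↦ (hsq₁ _ hx).imp fun y hy ↦ by rw [← hy, sq]) (hodd₁ _)
  have := IsRealClosed.of_linearOrderedField (R := R₂)
    (fun hx ↦ (hsq₂ _ hx).imp fun y hy ↦ by rw [← hy, sq]) (hodd₂ _)
  exact IsRealClosed.nonempty_ringEquiv_adjoinRoot_X_sq_add_one huncount hcard
end

section
/- There exists a subfield K of the field of complex numbers ℂ together with a linear order on K making K a linearly ordered field (with the ring operations inherited from ℂ) which is not Archimedean; consequently K, and hence ℂ, contains a nonzero element x with |x| < 1/n for every positive natural number n with respect to that order. -/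
/-!
The hyperreals `ℝ*` form a non-Archimedean ordered field of characteristic zero and cardinality
continuum. Hence their algebraic closure is an algebraically closed field of characteristic zero
and cardinality continuum, so it is isomorphic to `ℂ` (Steinitz), and `ℝ*` embeds into `ℂ`. The
order of `ℝ*` transported to the image of this embedding makes it a non-Archimedean ordered
subfield of `ℂ`, and the inverse of any element exceeding every natural number is a nonzero
infinitesimal.
-/

open Cardinal Hyperreal

theorem Hyperreal.cardinalMk : #ℝ* = 𝔠 := by
  apply le_antisymm
  · calc #ℝ* ≤ #(ℕ → ℝ) :=
          mk_le_of_surjective (f := ofSeq) fun x => Quotient.inductionOn x fun f => ⟨f, rfl⟩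
      _ = 𝔠 := by simp [mk_real, continuum_power_aleph0]
  · simpa [mk_real] using mk_le_of_injective (f := ((↑) : ℝ → ℝ*)) fun _ _ => coe_eq_coe.mp

theorem Hyperreal.not_archimedean : ¬ Archimedean ℝ* := by
  rw [archimedean_iff_nat_le]
  push Not
  exact ⟨ω, fun n => by exact_mod_cast coe_lt_omega n⟩

theorem nonempty_ringHom_complex_of_cardinalMk_eq_continuum {K : Type} [Field K] [CharZero K]
    (hK : #K = 𝔠) : Nonempty (K →+* ℂ) := by
  have hA : #(AlgebraicClosure K) = 𝔠 := by
    refine le_antisymm ?_ ?_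
    · simpa [hK, aleph0_le_continuum] using
        Algebra.IsAlgebraic.cardinalMk_le_max K (AlgebraicClosure K)
    · exact hK ▸ mk_le_of_injective (algebraMap K (AlgebraicClosure K)).injective
  have : CharZero (AlgebraicClosure K) :=
    charZero_of_injective_algebraMap (algebraMap K (AlgebraicClosure K)).injective
  obtain ⟨e⟩ := IsAlgClosed.ringEquiv_of_equiv_of_charZero (K := AlgebraicClosure K) (L := ℂ)
    (hA ▸ aleph0_lt_continuum) (Cardinal.eq.mp (by rw [hA, mk_complex]))
  exact ⟨e.toRingHom.comp (algebraMap K (AlgebraicClosure K))⟩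

theorem RingHom.isStrictOrderedRing_of_strictMono {R S : Type*} [Semiring R] [LinearOrder R]
    [Semiring S] [PartialOrder S] [IsStrictOrderedRing S] (f : R →+* S) (hf : StrictMono f) :
    IsStrictOrderedRing R :=
  Function.Injective.isStrictOrderedRing f (map_zero f) (map_one f) (map_add f) (map_mul f)
    hf.le_iff_le hf.lt_iff_lt

theorem RingEquiv.not_archimedean_of_strictMono {R S : Type*} [Semiring R] [LinearOrder R]
    [Semiring S] [LinearOrder S] (e : R ≃+* S) (he : StrictMono e) (hS : ¬ Archimedean S) :
    ¬ Archimedean R := fun _ =>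
  hS <| Archimedean.comap e.symm.toRingHom.toAddMonoidHom fun a b hab =>
    he.lt_iff_lt.mp (by simpa using hab)

theorem exists_ne_zero_abs_lt_one_div_natCast_of_not_archimedean {S : Type*} [Field S]
    [LinearOrder S] [IsStrictOrderedRing S] (h : ¬ Archimedean S) :
    ∃ x : S, x ≠ 0 ∧ ∀ n : ℕ, 0 < n → |x| < 1 / n := by
  rw [archimedean_iff_nat_le] at h
  push Not at h
  obtain ⟨y, hy⟩ := h
  have hy_pos : 0 < y := (Nat.cast_nonneg 0).trans_lt (hy 0)
  refine ⟨y⁻¹, inv_ne_zero hy_pos.ne', fun n hn => ?_⟩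
  rw [abs_of_pos (inv_pos.mpr hy_pos), one_div]
  exact inv_strictAnti₀ (by exact_mod_cast hn) (hy n)

/-- The field of complex numbers contains a non-Archimedean totally ordered subfield:
there is a subfield `K` of `ℂ` and a linear order on `K` making `K` (with the ring
operations inherited from `ℂ`) a linearly ordered field which is not Archimedean;
consequently `K` (and hence `ℂ`) contains a nonzero element `x` with `|x| < 1/n` for
every positive natural number `n`, with respect to that order. -/
theorem complex_contains_nonArchimedean_subfield :
    ∃ (K : Subfield ℂ) (LO : LinearOrder ↥K),
      (∀ a b c : ↥K, LO.lt a b → LO.lt (a + c) (b + c)) ∧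
      (∀ a b : ↥K, LO.lt 0 a → LO.lt 0 b → LO.lt 0 (a * b)) ∧
      (¬ ∀ x : ↥K, ∃ n : ℕ, LO.le x (n : ↥K)) ∧
      ∃ x : ↥K, x ≠ 0 ∧ ∀ n : ℕ, 0 < n → LO.lt (LO.max (-x) x) (1 / (n : ↥K)) := by
  obtain ⟨f⟩ := nonempty_ringHom_complex_of_cardinalMk_eq_continuum Hyperreal.cardinalMk
  let e : f.fieldRange ≃+* ℝ* := f.rangeRestrictFieldEquiv.symm
  let _ : LinearOrder f.fieldRange := LinearOrder.lift' e e.injective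
  have he : StrictMono e := fun _ _ => id
  have := e.toRingHom.isStrictOrderedRing_of_strictMono he
  have hK := e.not_archimedean_of_strictMono he Hyperreal.not_archimedean
  obtain ⟨x, hx0, hx⟩ := exists_ne_zero_abs_lt_one_div_natCast_of_not_archimedean hK
  refine ⟨f.fieldRange, inferInstance, fun _ _ c h => add_lt_add_left h c, fun _ _ => mul_pos,
    by rwa [archimedean_iff_nat_le] at hK, x, hx0, fun n hn => ?_⟩
  simpa only [abs, max_comm] using hx n hn
end

section
/- Let K be a linearly ordered field and let x ∈ K be a nonzero element that is algebraic over ℚ (i.e., x is a root of some nonzero polynomial with rational coefficients). Then there exists a positive natural number n such that 1/n ≤ |x| and |x| ≤ n, where |x| = max{−x, x}. In particular, a nonzero element algebraic over ℚ is neither infinitesimal nor infinitely large. -/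
/-!
For `|x| ≥ 1`, a root `x` of `∑ aᵢ Xⁱ` of degree `d` satisfies `|a_d| |x|^d ≤ ∑_{i<d} |aᵢ| |x|^(d-1)`,
hence `|x| ≤ max 1 (∑_{i<d} |aᵢ| / |a_d|)`. For rational coefficients this bound is a rational number,
so a natural number bounds `|x|`. Since `x⁻¹` is algebraic too, the same bound for `|x⁻¹|` gives the
lower bound on `|x|`.
-/

open Polynomial Finset

namespace Polynomial

variable {K : Type*} [Field K] [LinearOrder K] [IsStrictOrderedRing K]

theorem IsRoot.abs_leadingCoeff_mul_abs_le {p : K[X]} (hp : p ≠ 0) {x : K} (hx : p.IsRoot x)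
    (h1x : 1 ≤ |x|) :
    |p.leadingCoeff| * |x| ≤ ∑ i ∈ range p.natDegree, |p.coeff i| := by
  have hroot : p.leadingCoeff * x ^ p.natDegree = -∑ i ∈ range p.natDegree, p.coeff i * x ^ i := by
    have := hx.eq_zero
    rw [eval_eq_sum_range, sum_range_succ] at this
    rw [leadingCoeff]
    linear_combination this
  obtain ⟨k, hk⟩ : ∃ k, p.natDegree = k + 1 :=
    Nat.exists_eq_add_one.mpr (natDegree_pos_iff_degree_pos.mpr (degree_pos_of_root hp hx))
  refine le_of_mul_le_mul_right ?_ (pow_pos (one_pos.trans_le h1x) k)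
  calc |p.leadingCoeff| * |x| * |x| ^ k = |p.leadingCoeff * x ^ p.natDegree| := by
        rw [abs_mul, abs_pow, hk, pow_succ]; ring
    _ ≤ ∑ i ∈ range (k + 1), |p.coeff i| * |x| ^ i := by
        rw [hroot, abs_neg, hk]
        refine (abs_sum_le_sum_abs _ _).trans_eq (sum_congr rfl fun i _ => ?_)
        rw [abs_mul, abs_pow]
    _ ≤ ∑ i ∈ range (k + 1), |p.coeff i| * |x| ^ k := by
        gcongr with i hi
        exact Nat.lt_succ_iff.mp (mem_range.mp hi)
    _ = (∑ i ∈ range p.natDegree, |p.coeff i|) * |x| ^ k := by rw [hk, sum_mul]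

theorem IsRoot.abs_le_max_one_sum_div {p : K[X]} (hp : p ≠ 0) {x : K} (hx : p.IsRoot x) :
    |x| ≤ max 1 ((∑ i ∈ range p.natDegree, |p.coeff i|) / |p.leadingCoeff|) := by
  rcases le_or_gt |x| 1 with h | h1x
  · exact le_max_of_le_left h
  · refine le_max_of_le_right ((le_div_iff₀ ?_).mpr ?_)
    · exact abs_pos.mpr (leadingCoeff_ne_zero.mpr hp)
    · rw [mul_comm]
      exact hx.abs_leadingCoeff_mul_abs_le hp h1x.le

end Polynomial

theorem IsAlgebraic.exists_nat_abs_le {K : Type*} [Field K] [LinearOrder K]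
    [IsStrictOrderedRing K] {x : K} (hx : IsAlgebraic ℚ x) : ∃ n : ℕ, |x| ≤ n := by
  obtain ⟨p, hp, hpx⟩ := hx
  have hroot : (p.map (algebraMap ℚ K)).IsRoot x := by rwa [IsRoot, eval_map_algebraMap]
  have hbound :=
    hroot.abs_le_max_one_sum_div ((Polynomial.map_ne_zero_iff (algebraMap ℚ K).injective).mpr hp)
  obtain ⟨n, hn⟩ :=
    exists_nat_ge (max 1 ((∑ i ∈ range p.natDegree, |p.coeff i|) / |p.leadingCoeff|))
  refine ⟨n, hbound.trans ?_⟩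
  simp only [natDegree_map, leadingCoeff_map, coeff_map, eq_ratCast]
  exact_mod_cast hn

/-- In a linearly ordered field, a nonzero element `x` that is algebraic over `ℚ` satisfies
`1/n ≤ |x|` and `|x| ≤ n` for some positive natural number `n`; in particular it is neither
infinitesimal nor infinitely large. -/
theorem algebraic_is_unit_in_ordered_field {K : Type u} [Field K] [LinearOrder K] [IsStrictOrderedRing K]
    (x : K) (hx : x ≠ 0) (halg : IsAlgebraic ℚ x) :
    ∃ n : ℕ, 0 < n ∧ 1 / (n : K) ≤ |x| ∧ |x| ≤ (n : K) := by
  obtain ⟨m, hm⟩ := halg.exists_nat_abs_le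
  obtain ⟨m', hm'⟩ := halg.inv.exists_nat_abs_le
  refine ⟨m + m' + 1, Nat.succ_pos _, ?_, ?_⟩
  · rw [one_div_le (by positivity) (abs_pos.mpr hx), one_div, ← abs_inv]
    exact hm'.trans (by gcongr; omega)
  · exact hm.trans (by gcongr; omega)
end

section
/- Let α be a real number that is transcendental over ℚ. Then there exists a subfield K of ℝ such that α ∉ K, the cardinality of K equals the cardinality of the continuum 𝔠, every nonnegative element of K has a square root in K, and every polynomial with coefficients in K of odd degree has a root in K. In particular, K is a proper real closed Archimedean subfield of ℝ of cardinality 𝔠. -/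
/-!
Extend `{α}` to a transcendence basis `B` of `ℝ` over `ℚ`; since `ℚ` is countable, `B` has
cardinality `𝔠`, and so has `S = B \ {α}`. Let `K` be the relative algebraic closure of `ℚ(S)`
in `ℝ`. Algebraic independence of `B` makes `α` transcendental over `ℚ(S)`, hence `α ∉ K`, and
`S ⊆ K` gives `#K = 𝔠`. A subfield of a real closed field that contains everything algebraic
over it is real closed, since the square roots and odd-degree roots existing in `ℝ` are
algebraic over it.
-/

open Polynomial Cardinal

universe u

theorem Real.exists_isRoot_of_odd_natDegree {p : ℝ[X]} (hp : Odd p.natDegree) :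
    ∃ x, p.IsRoot x := by
  have hp0 : p ≠ 0 := by rintro rfl; simp at hp
  have hc : p.leadingCoeff ≠ 0 := leadingCoeff_ne_zero.mpr hp0
  -- `q` has the roots of `p` and a positive leading coefficient, so `q` tends to `+∞` at `+∞`
  -- and, its degree being odd, to `-∞` at `-∞`.
  set q := C p.leadingCoeff * p with hq
  have hdeg : 0 < q.degree := by
    rw [hq, degree_C_mul hc, ← natDegree_pos_iff_degree_pos]
    exact hp.pos
  have hlc : q.leadingCoeff = p.leadingCoeff ^ 2 := by
    rw [hq, leadingCoeff_mul, leadingCoeff_C, sq]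
  have hnat : q.natDegree = p.natDegree := natDegree_C_mul hc
  obtain ⟨b, hb⟩ := ((q.tendsto_atTop_of_leadingCoeff_nonneg hdeg
    (hlc ▸ sq_nonneg _)).eventually_ge_atTop 0).exists
  obtain ⟨a, ha⟩ := (((q.comp (-X)).tendsto_atBot_of_leadingCoeff_nonpos (by simpa using hdeg)
    (by simp [hlc, hnat, hp.neg_one_pow, sq_nonneg])).eventually_le_atBot 0).exists
  obtain ⟨x, hx⟩ := intermediate_value_univ (-a) b q.continuous ⟨by simpa using ha, hb⟩
  exact ⟨x, (mul_eq_zero.mp (by simpa [hq] using hx)).resolve_left hc⟩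

instance Real.isRealClosed : IsRealClosed ℝ :=
  .of_linearOrderedField (fun hx => ⟨√_, (Real.mul_self_sqrt hx).symm⟩)
    Real.exists_isRoot_of_odd_natDegree

theorem Subfield.isRealClosed_of_isAlgebraic_mem {R : Type*} [Field R] [LinearOrder R]
    [IsStrictOrderedRing R] [IsRealClosed R] (K : Subfield R)
    (hK : ∀ x : R, IsAlgebraic K x → x ∈ K) : IsRealClosed K := by
  refine .of_linearOrderedField (fun {x} hx => ?_) (fun {p} hp => ?_)
  · obtain ⟨r, hr⟩ := IsRealClosed.nonneg_iff_isSquare.mp (show (0 : R) ≤ x from hx)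
    have hrK : r ∈ K := hK r ⟨X ^ 2 - C x, X_pow_sub_C_ne_zero two_pos _, by
      simp only [map_sub, map_pow, aeval_X, aeval_C]
      exact sub_eq_zero.mpr (sq r ▸ hr.symm)⟩
    exact ⟨⟨r, hrK⟩, Subtype.ext hr⟩
  · have hp0 : p ≠ 0 := by rintro rfl; simp at hp
    obtain ⟨x, hx⟩ := IsRealClosed.exists_isRoot_of_odd_natDegree
      (f := p.map (algebraMap K R)) (by rwa [natDegree_map])
    have hxK : x ∈ K := hK x ⟨p, hp0, by rwa [aeval_def, eval₂_eq_eval_map]⟩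
    exact ⟨⟨x, hxK⟩, hx.of_map (algebraMap K R).injective⟩

theorem mem_algebraicClosure_of_isAlgebraic_toSubfield {F E : Type*} [Field F] [Field E] [Algebra F E]
    {x : E} (hx : IsAlgebraic (algebraicClosure F E).toSubfield x) :
    x ∈ algebraicClosure F E :=
  mem_algebraicClosure_iff'.mpr <| isIntegral_trans (A := algebraicClosure F E) x
    (hx : IsAlgebraic (algebraicClosure F E) x).isIntegral

theorem IsTranscendenceBasis.cardinalMk_eq_of_lt {F E ι : Type u} [CommRing F] [Nontrivial F]
    [CommRing E] [IsDomain E] [Algebra F E] [Nonempty ι] {x : ι → E}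
    (hx : IsTranscendenceBasis F x) (hE : #F ⊔ ℵ₀ < #E) : #ι = #E := by
  have h := hx.lift_cardinalMk_eq_max_lift
  rw [lift_id, lift_id, lift_id, sup_right_comm] at h
  rw [h] at hE ⊢
  exact (sup_eq_right.mpr (lt_sup_iff.mp hE |>.resolve_left (lt_irrefl _)).le).symm

theorem Transcendental.exists_isTranscendenceBasis_transcendental_adjoin {F E : Type*}
    [Field F] [Field E] [Algebra F E] {a : E} (ha : Transcendental F a) :
    ∃ t : Set E, a ∈ t ∧ IsTranscendenceBasis F ((↑) : t → E) ∧
      Transcendental (IntermediateField.adjoin F (t \ {a})) a := by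
  obtain ⟨t, hat, ht⟩ := exists_isTranscendenceBasis_superset
    ((algebraicIndependent_singleton_iff (⟨a, rfl⟩ : ({a} : Set E))).mpr ha)
  have ha' : a ∈ t := hat rfl
  have himage : (↑) '' ({⟨a, ha'⟩}ᶜ : Set t) = t \ {a} := by ext y; simp
  have htrans := ht.1.transcendental_adjoin (i := ⟨a, ha'⟩) (s := {⟨a, ha'⟩}ᶜ) (by simp)
  rw [himage] at htrans
  exact ⟨t, ha', ht, IntermediateField.transcendental_adjoin_iff.mpr htrans⟩

theorem Transcendental.exists_cardinalMk_eq_transcendental_adjoin {F E : Type u} [Field F]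
    [Field E] [Algebra F E] {a : E} (ha : Transcendental F a) (hE : #F ⊔ ℵ₀ < #E) :
    ∃ s : Set E, #s = #E ∧ Transcendental (IntermediateField.adjoin F s) a := by
  obtain ⟨t, hat, ht, htrans⟩ := ha.exists_isTranscendenceBasis_transcendental_adjoin
  have : Nonempty t := ⟨⟨a, hat⟩⟩
  have hsum := mk_sdiff_add_mk (Set.singleton_subset_iff.mpr hat)
  rw [mk_singleton, add_comm, ht.cardinalMk_eq_of_lt hE] at hsum
  have hE' : ℵ₀ ≤ #E := (le_sup_right.trans_lt hE).le
  exact ⟨t \ {a}, eq_of_add_eq_of_aleph0_le hsum (one_lt_aleph0.trans_le hE') hE', htrans⟩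

/-- For every real number `α` transcendental over `ℚ` there exists a subfield `K` of `ℝ`
with `α ∉ K`, of cardinality the continuum, in which every nonnegative element has a square
root and every odd-degree polynomial has a root; i.e. a proper real closed Archimedean
subfield of `ℝ` of cardinality `𝔠` avoiding `α`. -/
theorem exists_realClosed_subfield_avoiding (α : ℝ) (hα : Transcendental ℚ α) :
    ∃ K : Subfield ℝ, α ∉ K ∧ Cardinal.mk ↥K = Cardinal.continuum ∧
      (∀ x : ↥K, 0 ≤ x → ∃ y : ↥K, y ^ 2 = x) ∧
      (∀ p : Polynomial ↥K, Odd p.natDegree → ∃ x : ↥K, p.IsRoot x) := by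
  obtain ⟨s, hs, hαs⟩ :=
    hα.exists_cardinalMk_eq_transcendental_adjoin (by simp : #ℚ ⊔ ℵ₀ < #ℝ)
  set A := algebraicClosure (IntermediateField.adjoin ℚ s) ℝ
  have : IsRealClosed A.toSubfield :=
    A.toSubfield.isRealClosed_of_isAlgebraic_mem fun _ => mem_algebraicClosure_of_isAlgebraic_toSubfield
  have hsA : s ⊆ A := fun x hx => A.algebraMap_mem ⟨x, IntermediateField.subset_adjoin ℚ s hx⟩
  refine ⟨A.toSubfield, fun h => hαs (mem_algebraicClosure_iff.mp h), ?_, fun x hx => ?_,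
    fun p hp => IsRealClosed.exists_isRoot_of_odd_natDegree hp⟩
  · refine le_antisymm ((mk_subtype_le _).trans_eq mk_real) ?_
    rw [← mk_real, ← hs]
    exact mk_le_mk_of_subset hsA
  · obtain ⟨y, hy⟩ := IsRealClosed.nonneg_iff_isSquare.mp hx
    exact ⟨y, by rw [hy, sq]⟩
end

section
/- There exists a proper subfield K of ℂ (K ≠ ℂ) such that K, with its inherited field operations, is isomorphic to ℂ as a field. -/
/-!
An uncountable algebraically closed field of characteristic zero is determined up to isomorphism
by its cardinality. The algebraic closure of `ℂ(X)` is such a field of cardinality `𝔠`, so it is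
isomorphic to `ℂ`; transporting its subfield `ℂ`, which misses the transcendental `X`, along this
isomorphism gives a proper subfield of `ℂ` isomorphic to `ℂ`.
-/

open Cardinal Polynomial

theorem Transcendental.not_surjective_algebraMap {R A : Type*} [CommRing R] [Nontrivial R] [Ring A]
    [Algebra R A] {x : A} (hx : Transcendental R x) : ¬ Function.Surjective (algebraMap R A) := by
  intro h
  obtain ⟨c, rfl⟩ := h x
  exact hx (isAlgebraic_algebraMap c)

section

variable (K : Type*) [Field K]

theorem cardinalMk_algebraicClosure_ratFunc [Infinite K] :
    #(AlgebraicClosure (RatFunc K)) = #K := by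
  refine le_antisymm ?_ (mk_le_of_injective (algebraMap K (AlgebraicClosure (RatFunc K))).injective)
  calc #(AlgebraicClosure (RatFunc K))
      ≤ max #(RatFunc K) ℵ₀ := Algebra.IsAlgebraic.cardinalMk_le_max _ _
    _ = max #K[X] ℵ₀ := by rw [IsFractionRing.cardinalMk K[X] (RatFunc K)]
    _ = #K := by
      rw [Polynomial.cardinalMk_eq_max, max_assoc, max_self, max_eq_left (aleph0_le_mk K)]

theorem transcendental_algebraicClosure_ratFunc_X :
    Transcendental K (algebraMap (RatFunc K) (AlgebraicClosure (RatFunc K)) RatFunc.X) :=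
  (transcendental_algebraMap_iff (algebraMap (RatFunc K) _).injective).2 RatFunc.transcendental_X

theorem IsAlgClosed.exists_ringHom_not_surjective [IsAlgClosed K] [CharZero K] (hK : ℵ₀ < #K) :
    ∃ f : K →+* K, ¬ Function.Surjective f := by
  have : Infinite K := infinite_iff.2 hK.le
  let L := AlgebraicClosure (RatFunc K)
  have : CharZero L := charZero_of_injective_algebraMap (algebraMap K L).injective
  have hL : #L = #K := cardinalMk_algebraicClosure_ratFunc K
  obtain ⟨e⟩ := IsAlgClosed.ringEquiv_of_equiv_of_charZero (hL ▸ hK) (Cardinal.eq.1 hL)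
  refine ⟨e.toRingHom.comp (algebraMap K L), fun h ↦ ?_⟩
  exact (transcendental_algebraicClosure_ratFunc_X K).not_surjective_algebraMap
    (Function.Surjective.of_comp_left (f := e) h e.injective)

end

/-- There exists a proper subfield of `ℂ` which is isomorphic, as a field, to `ℂ` itself. -/
theorem exists_proper_subfield_isomorphic_to_complex :
    ∃ K : Subfield ℂ, K ≠ ⊤ ∧ Nonempty (↥K ≃+* ℂ) := by
  obtain ⟨f, hf⟩ := IsAlgClosed.exists_ringHom_not_surjective ℂ (mk_complex ▸ aleph0_lt_continuum)
  refine ⟨f.fieldRange, fun h ↦ hf fun z ↦ ?_, ⟨f.rangeRestrictFieldEquiv.symm⟩⟩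
  exact RingHom.mem_fieldRange.1 (h ▸ Subfield.mem_top z)
end

section
/- The hyperreal field ℝ* is real closed: every nonnegative hyperreal number has a square root in ℝ*, and every polynomial with hyperreal coefficients of odd degree has a root in ℝ*. -/
open Polynomial

/-- An auxiliary lemma: a real polynomial of odd degree with positive leading coefficient
has a root. -/
lemma aux_exists_root_of_pos_lc (q : ℝ[X]) (hodd : Odd q.natDegree)
    (hlc : 0 < q.leadingCoeff) : ∃ x, q.IsRoot x := by
  have hq0 : q ≠ 0 := by
    intro h
    simp [h] at hodd
  have hdeg : 0 < q.degree := by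
    rw [Polynomial.natDegree_pos_iff_degree_pos.symm]
    exact Nat.pos_of_ne_zero (by rintro h; rw [h] at hodd; simp at hodd)
  have T1 : Filter.Tendsto (fun x => q.eval x) Filter.atTop Filter.atTop :=
    q.tendsto_atTop_of_leadingCoeff_nonneg hdeg hlc.le
  set s : ℝ[X] := q.comp (-X) with hs
  have hXdeg : (-X : ℝ[X]).natDegree = 1 := by simp
  have hsdeg : s.natDegree = q.natDegree := by
    rw [hs, Polynomial.natDegree_comp, hXdeg, mul_one]
  have hslc : s.leadingCoeff = q.leadingCoeff * (-1) ^ q.natDegree := by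
    rw [hs, Polynomial.leadingCoeff_comp (by rw [hXdeg]; norm_num)]
    congr 1
    simp [Polynomial.leadingCoeff]
  have hneg : s.leadingCoeff = -q.leadingCoeff := by
    rw [hslc, hodd.neg_one_pow, mul_neg_one]
  have hsdeg' : 0 < s.degree := by
    rw [← Polynomial.natDegree_pos_iff_degree_pos, hsdeg]
    exact Polynomial.natDegree_pos_iff_degree_pos.mpr hdeg
  have T2 : Filter.Tendsto (fun x => s.eval x) Filter.atTop Filter.atBot :=
    s.tendsto_atBot_of_leadingCoeff_nonpos hsdeg' (by rw [hneg]; linarith)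
  obtain ⟨a, ha⟩ := (T2.eventually_le_atBot 0).exists
  obtain ⟨b, hb⟩ := (T1.eventually_ge_atTop 0).exists
  have ha' : q.eval (-a) ≤ 0 := by
    have : s.eval a = q.eval (-a) := by simp [hs, Polynomial.eval_comp]
    linarith [this ▸ ha]
  have hcont : Continuous fun x => q.eval x := q.continuous
  have := intermediate_value_univ (-a) b hcont
  obtain ⟨x, hx⟩ := this ⟨ha', hb⟩
  exact ⟨x, hx⟩

/-- Every real polynomial of odd degree has a root. -/
lemma aux_exists_root_of_odd (q : ℝ[X]) (hodd : Odd q.natDegree) : ∃ x, q.IsRoot x := by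
  have hq0 : q ≠ 0 := by
    rintro rfl; simp at hodd
  rcases lt_or_ge 0 q.leadingCoeff with h | h
  · exact aux_exists_root_of_pos_lc q hodd h
  · have hlc : q.leadingCoeff ≠ 0 := Polynomial.leadingCoeff_ne_zero.mpr hq0
    have : 0 < (-q).leadingCoeff := by
      rw [Polynomial.leadingCoeff_neg]
      cases h.lt_or_eq with
      | inl h => linarith
      | inr h => exact absurd h hlc
    obtain ⟨x, hx⟩ := aux_exists_root_of_pos_lc (-q) (by rwa [Polynomial.natDegree_neg]) this
    exact ⟨x, by simpa using hx⟩

/-- The hyperreal field — the ultrapower `ℝ^ℕ/𝒰` with respect to a free ultrafilter `𝒰` on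
`ℕ` — is real closed: every nonnegative element has a square root and every polynomial of
odd degree has a root. -/
theorem hyperreal_is_realClosed (𝒰 : Ultrafilter ℕ)
    (hfree : ∀ s : Set ℕ, s ∈ 𝒰 → s.Infinite) :
    (∀ x : Filter.Germ (𝒰 : Filter ℕ) ℝ, 0 ≤ x → ∃ y, y ^ 2 = x) ∧
    (∀ p : Polynomial (Filter.Germ (𝒰 : Filter ℕ) ℝ), Odd p.natDegree →
      ∃ x, p.IsRoot x) := by
  constructor
  · intro x hx
    induction x using Filter.Germ.inductionOn with
    | h f =>
      refine ⟨(↑(fun n => Real.sqrt (f n)) : Filter.Germ (𝒰 : Filter ℕ) ℝ), ?_⟩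
      rw [← Filter.Germ.coe_pow, Filter.Germ.coe_eq]
      filter_upwards [Filter.Germ.coe_nonneg.mp hx] with n hn
      simp [Real.sq_sqrt hn]
  · intro p hodd
    set d := p.natDegree with hd
    -- choose representatives for the coefficients
    have hrep : ∀ i : ℕ, ∃ c : ℕ → ℝ, (↑c : Filter.Germ (𝒰 : Filter ℕ) ℝ) = p.coeff i :=
      fun i => Filter.Germ.inductionOn (p.coeff i) fun c => ⟨c, rfl⟩
    choose c hc using hrep
    -- pointwise polynomials
    set q : ℕ → ℝ[X] := fun n => ∑ i ∈ Finset.range (d + 1), Polynomial.C (c i n) * X ^ i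
      with hq
    -- leading coefficient is a.e. nonzero
    have hp0 : p ≠ 0 := by
      rintro rfl; simp [hd] at hodd
    have hlc : p.coeff d ≠ 0 := Polynomial.leadingCoeff_ne_zero.mpr hp0
    have hlcne : ¬ (↑(c d) : Filter.Germ (𝒰 : Filter ℕ) ℝ) = 0 := by rw [hc]; exact hlc
    have hne : ∀ᶠ n in (𝒰 : Filter ℕ), c d n ≠ 0 := by
      rw [Ultrafilter.eventually_not]
      intro h
      exact hlcne (Filter.Germ.coe_eq.mpr h)
    -- for such n, q n has natDegree d, which is odd, so has a root
    have hqroot : ∀ n, c d n ≠ 0 → ∃ x, (q n).IsRoot x := by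
      intro n hn
      apply aux_exists_root_of_odd
      have hdq : (q n).natDegree = d := by
        have hle : (q n).natDegree ≤ d := by
          apply Polynomial.natDegree_sum_le_of_forall_le
          intro i hi
          calc (Polynomial.C (c i n) * X ^ i).natDegree ≤ i := by
                apply le_trans (Polynomial.natDegree_C_mul_le _ _)
                simp
            _ ≤ d := Nat.lt_succ_iff.mp (Finset.mem_range.mp hi)
        have hcoeff : (q n).coeff d = c d n := by
          rw [hq]
          rw [Polynomial.finset_sum_coeff]
          rw [Finset.sum_eq_single d]
          · simp
          · intro i hi hne
            simp only [Polynomial.coeff_C_mul, Polynomial.coeff_X_pow]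
            rw [if_neg (Ne.symm hne), mul_zero]
          · intro h; exact absurd (Finset.self_mem_range_succ d) h
        exact le_antisymm hle (Polynomial.le_natDegree_of_ne_zero (hcoeff ▸ hn))
      rw [hdq]; exact hodd
    -- choose roots
    classical
    set r : ℕ → ℝ := fun n => if h : c d n ≠ 0 then (hqroot n h).choose else 0 with hr
    have hroot : ∀ n, c d n ≠ 0 → (q n).eval (r n) = 0 := by
      intro n hn
      simp only [hr, dif_pos hn]
      exact (hqroot n hn).choose_spec
    refine ⟨(↑r : Filter.Germ (𝒰 : Filter ℕ) ℝ), ?_⟩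
    unfold Polynomial.IsRoot
    rw [Polynomial.eval_eq_sum_range]
    have key : ∀ i ∈ Finset.range (d + 1),
        p.coeff i * (↑r : Filter.Germ (𝒰 : Filter ℕ) ℝ) ^ i
          = (↑(fun n => c i n * r n ^ i) : Filter.Germ (𝒰 : Filter ℕ) ℝ) := by
      intro i _
      rw [← hc i, ← Filter.Germ.coe_pow, ← Filter.Germ.coe_mul]
      rfl
    rw [Finset.sum_congr rfl key]
    have hsum : (∑ i ∈ Finset.range (d + 1),
        (↑(fun n => c i n * r n ^ i) : Filter.Germ (𝒰 : Filter ℕ) ℝ))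
        = (↑(fun n => ∑ i ∈ Finset.range (d + 1), c i n * r n ^ i) :
            Filter.Germ (𝒰 : Filter ℕ) ℝ) := by
      have hfun : (fun n => ∑ i ∈ Finset.range (d + 1), c i n * r n ^ i)
          = ∑ i ∈ Finset.range (d + 1), (fun n => c i n * r n ^ i) := by
        funext n; rw [Finset.sum_apply]
      rw [hfun]
      exact (map_sum (Filter.Germ.coeRingHom (𝒰 : Filter ℕ))
        (fun i => (fun n => c i n * r n ^ i)) (Finset.range (d + 1))).symm
    rw [hsum]
    have : (0 : Filter.Germ (𝒰 : Filter ℕ) ℝ) = (↑(fun _ : ℕ => (0:ℝ)) : Filter.Germ (𝒰 : Filter ℕ) ℝ) := rfl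
    rw [this, Filter.Germ.coe_eq]
    filter_upwards [hne] with n hn
    have := hroot n hn
    rw [hq] at this
    simpa [Polynomial.eval_finset_sum] using this
end
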